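/- Let G ≤ H be finite groups and X a finite G-set. Then for every n ≥ 1, the n-th power of the induced set satisfies (ind_G^H X)ⁿ ≅ ind_{G_n}^{H_n} (Xⁿ) as H_n-sets, where G_n = Gⁿ ⋊ S_n ≤ H_n = Hⁿ ⋊ S_n are the wreath products acting naturally on the Cartesian powers. -/

import Mathlib

section Ind
variable {K H : Type*} [Group K] [Group H]

/-- The equivalence relation on `H × X` defining the induced `H`-set of a `K`-set `X`
along a homomorphism `f : K →* H`:
`(h₁,x₁) ∼ (h₂,x₂)` iff `∃ g, h₂ = h₁ (f g)⁻¹` and `x₂ = g • x₁`. -/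
def indSetoid (f : K →* H) (X : Type*) [MulAction K X] : Setoid (H × X) where
  r p q := ∃ g : K, q.1 = p.1 * (f g)⁻¹ ∧ q.2 = g • p.2
  iseqv := by
    constructor
    · exact fun p => ⟨1, by simp⟩
    · rintro p q ⟨g, h1, h2⟩
      exact ⟨g⁻¹, by simp [h1, mul_assoc], by simp [h2]⟩
    · rintro p q r ⟨g, h1, h2⟩ ⟨g', h1', h2'⟩
      exact ⟨g' * g, by simp [h1, h1', mul_assoc], by simp [h2, h2', mul_smul]⟩

/-- The induced `H`-set `ind_K^H X = (H × X)/∼`. -/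
def Ind (f : K →* H) (X : Type*) [MulAction K X] : Type _ := Quotient (indSetoid f X)

/-- `H` acts on the induced set by left multiplication on the first coordinate. -/
instance Ind.mulAction (f : K →* H) (X : Type*) [MulAction K X] :
    MulAction H (Ind f X) where
  smul h := Quotient.map (fun p => (h * p.1, p.2))
    (by rintro p q ⟨g, h1, h2⟩; exact ⟨g, by simp [h1, mul_assoc], h2⟩)
  one_smul x := by
    refine Quotient.inductionOn x (fun p => ?_)
    show Quotient.map _ _ _ = _
    simp
  mul_smul a b x := by
    refine Quotient.inductionOn x (fun p => ?_)
    show Quotient.map _ _ _ = Quotient.map _ _ (Quotient.map _ _ _)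
    simp [mul_assoc]

end Ind
section Wreath

variable (G : Type*) [Group G] (ι : Type*)

/-- Permutations of `ι` act on `ι → G` by automorphisms (permuting the factors). -/
def permAut : Equiv.Perm ι →* MulAut (ι → G) where
  toFun σ :=
    { toEquiv := Equiv.arrowCongr σ (Equiv.refl G)
      map_mul' := fun v w => rfl }
  map_one' := by ext v i; rfl
  map_mul' σ τ := by ext v i; rfl

/-- The wreath product `G_ι = G^ι ⋊ Perm ι`. -/
def Wr : Type _ := (ι → G) ⋊[permAut G ι] Equiv.Perm ι

instance : Group (Wr G ι) := inferInstanceAs (Group ((ι → G) ⋊[permAut G ι] Equiv.Perm ι))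

variable {G ι}

/-- The `G^ι`-component of an element of the wreath product. -/
def Wr.l (w : Wr G ι) : ι → G := SemidirectProduct.left w

/-- The `Perm ι`-component of an element of the wreath product. -/
def Wr.p (w : Wr G ι) : Equiv.Perm ι := SemidirectProduct.right w

/-- Building an element of the wreath product from its two components. -/
def Wr.mk (v : ι → G) (σ : Equiv.Perm ι) : Wr G ι := ⟨v, σ⟩

@[simp] lemma Wr.l_mk (v : ι → G) (σ : Equiv.Perm ι) : (Wr.mk v σ).l = v := rfl
@[simp] lemma Wr.p_mk (v : ι → G) (σ : Equiv.Perm ι) : (Wr.mk v σ).p = σ := rfl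
@[simp] lemma Wr.l_one : (1 : Wr G ι).l = 1 := rfl
@[simp] lemma Wr.p_one : (1 : Wr G ι).p = 1 := rfl
@[simp] lemma Wr.l_mul (a b : Wr G ι) : (a * b).l = a.l * fun i => b.l (a.p.symm i) := rfl
@[simp] lemma Wr.p_mul (a b : Wr G ι) : (a * b).p = a.p * b.p := rfl

variable (G ι)

/-- The natural action of the wreath product `G_ι` on `X^ι`:
`S_ι` permutes the factors and `G^ι` acts componentwise. -/
instance wrAction (X : Type*) [MulAction G X] : MulAction (Wr G ι) (ι → X) where
  smul w y := fun i => w.l i • y (w.p.symm i)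
  one_smul y := funext fun i => by
    show (1 : Wr G ι).l i • y ((1 : Wr G ι).p.symm i) = y i
    simp
    rfl
  mul_smul a b y := funext fun i => by
    show (a * b).l i • y ((a * b).p.symm i) =
      a.l i • b.l (a.p.symm i) • y (b.p.symm (a.p.symm i))
    rw [Wr.l_mul, Wr.p_mul, Pi.mul_apply, mul_smul]
    rfl

@[simp] lemma wr_smul_apply {X : Type*} [MulAction G X] (w : Wr G ι) (y : ι → X) (i : ι) :
    (w • y) i = w.l i • y (w.p.symm i) := rfl

end Wreath
section WreathHoms

@[simp] lemma Wr.mk_mul {G : Type*} [Group G] {ι : Type*} (v w : ι → G)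
    (σ τ : Equiv.Perm ι) :
    Wr.mk v σ * Wr.mk w τ = Wr.mk (fun i => v i * w (σ.symm i)) (σ * τ) := rfl

@[simp] lemma Wr.left_mk {G : Type*} [Group G] {ι : Type*} (v : ι → G) (σ : Equiv.Perm ι) :
    SemidirectProduct.left (Wr.mk v σ) = v := rfl

@[simp] lemma Wr.right_mk {G : Type*} [Group G] {ι : Type*} (v : ι → G) (σ : Equiv.Perm ι) :
    SemidirectProduct.right (Wr.mk v σ) = σ := rfl

variable (G : Type*) [Group G]

/-- The natural embedding `G_ι × G_κ → G_{ι ⊕ κ}` of wreath products. -/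
def wrJoin (ι κ : Type*) : Wr G ι × Wr G κ →* Wr G (ι ⊕ κ) where
  toFun p := Wr.mk (Sum.elim p.1.l p.2.l) (Equiv.Perm.sumCongrHom ι κ (p.1.p, p.2.p))
  map_one' := by
    apply SemidirectProduct.ext
    · funext i; cases i <;> rfl
    · show Equiv.Perm.sumCongrHom ι κ (1, 1) = 1
      exact map_one _
  map_mul' p q := by
    show Wr.mk _ _ = Wr.mk _ _ * Wr.mk _ _
    rw [Wr.mk_mul]
    apply SemidirectProduct.ext
    · funext i
      cases i with
      | inl a =>
          show (p.1.l * fun i => q.1.l (p.1.p.symm i)) a = _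
          simp [Equiv.Perm.sumCongrHom]
      | inr b =>
          show (p.2.l * fun i => q.2.l (p.2.p.symm i)) b = _
          simp [Equiv.Perm.sumCongrHom]
    · exact map_mul (Equiv.Perm.sumCongrHom ι κ) (p.1.p, p.2.p) (q.1.p, q.2.p)

/-- Transport of wreath products along a bijection of index sets. -/
def wrCongrHom {ι κ : Type*} (e : ι ≃ κ) : Wr G ι →* Wr G κ where
  toFun w := Wr.mk (w.l ∘ e.symm) (e.permCongr w.p)
  map_one' := by
    apply SemidirectProduct.ext
    · rfl
    · show e.permCongr 1 = 1
      ext x; simp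
  map_mul' a b := by
    show Wr.mk _ _ = Wr.mk _ _ * Wr.mk _ _
    rw [Wr.mk_mul]
    apply SemidirectProduct.ext
    · funext i
      show (a.l * fun i => b.l (a.p.symm i)) (e.symm i) = _
      simp [Equiv.permCongr, Equiv.equivCongr]
    · ext x
      simp [Equiv.permCongr, Equiv.equivCongr, Equiv.Perm.mul_apply]

/-- The homomorphism of wreath products `K_ι → H_ι` induced by `f : K →* H`. -/
def wrMapHom {K H : Type*} [Group K] [Group H] (f : K →* H) (ι : Type*) :
    Wr K ι →* Wr H ι where
  toFun w := Wr.mk (f ∘ w.l) w.p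
  map_one' := by
    apply SemidirectProduct.ext
    · funext i; exact map_one f
    · rfl
  map_mul' a b := by
    show Wr.mk _ _ = Wr.mk _ _ * Wr.mk _ _
    rw [Wr.mk_mul]
    apply SemidirectProduct.ext
    · funext i
      show f ((a.l * fun i => b.l (a.p.symm i)) i) = _
      simp
    · rfl

variable (ι : Type*)

/-- The big `G`-diagonal in `X^ι`: tuples with two coordinates in the same `G`-orbit. -/
def bigDiag (X : Type*) [MulAction G X] : Set (ι → X) :=
  {y | ∃ i j, i ≠ j ∧ y i ∈ MulAction.orbit G (y j)}

/-- The wreath product `G_ι` acts on the complement of the big diagonal in `X^ι`. -/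
instance wrDiagAction (X : Type*) [MulAction G X] :
    MulAction (Wr G ι) {y : ι → X // y ∉ bigDiag G ι X} where
  smul w y := ⟨w • (y : ι → X), by
    rintro ⟨i, j, hij, g, hg⟩
    apply y.2
    refine ⟨w.p.symm i, w.p.symm j, fun h => hij (by simpa using congrArg w.p h), ?_⟩
    refine ⟨(w.l i)⁻¹ * g * w.l j, ?_⟩
    have hg' : g • (w.l j • (y : ι → X) (w.p.symm j)) = w.l i • (y : ι → X) (w.p.symm i) := hg
    calc ((w.l i)⁻¹ * g * w.l j) • (y : ι → X) (w.p.symm j)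
        = (w.l i)⁻¹ • g • w.l j • (y : ι → X) (w.p.symm j) := by
          rw [mul_smul, mul_smul]
      _ = (y : ι → X) (w.p.symm i) := by rw [hg', inv_smul_smul]⟩
  one_smul y := Subtype.ext (one_smul _ (y : ι → X))
  mul_smul a b y := Subtype.ext (mul_smul a b (y : ι → X))

end WreathHoms

/-!
A class `[(w, y)]` of the induced power is sent to its tuple of coordinates
`i ↦ [(w_i, y_{σ⁻¹ i})]`, where `σ` is the permutation part of `w`; right multiplication of `w`
by `G_n` can be moved across to `y`, so this is well defined, and it is visibly equivariant.
Writing `w` as its `Hⁿ`-part times its permutation part, which already lies in `G_n`, every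
class has a representative with trivial permutation, and on those the map is the coordinatewise
identification `[(h, x)]ᵢ ↦ [(hᵢ, xᵢ)]`, hence a bijection.
-/

@[simp] lemma wrMapHom_l {K H : Type*} [Group K] [Group H] (f : K →* H) {ι : Type*}
    (w : Wr K ι) : (wrMapHom f ι w).l = f ∘ w.l := rfl

@[simp] lemma wrMapHom_p {K H : Type*} [Group K] [Group H] (f : K →* H) {ι : Type*}
    (w : Wr K ι) : (wrMapHom f ι w).p = w.p := rfl

lemma Wr.ext {G ι : Type*} [Group G] {a b : Wr G ι} (hl : a.l = b.l) (hp : a.p = b.p) :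
    a = b :=
  SemidirectProduct.ext hl hp

namespace Ind

variable {K H : Type*} [Group K] [Group H] (f : K →* H) {X : Type*} [MulAction K X]

def mk (h : H) (x : X) : Ind f X := Quotient.mk (indSetoid f X) (h, x)

variable {f}

lemma exists_mk_eq (q : Ind f X) : ∃ h x, mk f h x = q :=
  Quotient.inductionOn q fun p => ⟨p.1, p.2, rfl⟩

lemma mk_eq_mk_iff {h h' : H} {x x' : X} :
    mk f h x = mk f h' x' ↔ ∃ k, h' = h * (f k)⁻¹ ∧ x' = k • x :=
  Quotient.eq

lemma mk_mul_map (h : H) (k : K) (x : X) : mk f (h * f k) x = mk f h (k • x) :=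
  Quotient.sound ⟨k, by simp, rfl⟩

variable (f) (ι : Type*)

def coords (w : Wr H ι) (y : ι → X) : ι → Ind f X :=
  fun i => mk f (w.l i) (y (w.p.symm i))

lemma coords_mul_wrMapHom (w : Wr H ι) (k : Wr K ι) (y : ι → X) :
    coords f ι (w * wrMapHom f ι k) y = coords f ι w (k • y) := by
  funext i
  simp only [coords, Wr.l_mul, wrMapHom_l, Wr.p_mul, wrMapHom_p, Pi.mul_apply,
    Function.comp_apply, wr_smul_apply, mk_mul_map]
  rfl

def powToPi : Ind (wrMapHom f ι) (ι → X) → ι → Ind f X :=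
  Quotient.lift (fun p => coords f ι p.1 p.2) <| by
    rintro ⟨w, y⟩ ⟨w', y'⟩ ⟨k, rfl, rfl⟩
    simp only [← coords_mul_wrMapHom, inv_mul_cancel_right]

variable {f ι}

lemma powToPi_smul (w : Wr H ι) (q : Ind (wrMapHom f ι) (ι → X)) :
    powToPi f ι (w • q) = w • powToPi f ι q :=
  Quotient.inductionOn q fun _ => rfl

lemma exists_mk_one_eq (q : Ind (wrMapHom f ι) (ι → X)) :
    ∃ (a : ι → H) (y : ι → X), mk (wrMapHom f ι) (Wr.mk a 1) y = q := by
  obtain ⟨w, y, rfl⟩ := exists_mk_eq q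
  have hw : w = Wr.mk w.l 1 * wrMapHom f ι (Wr.mk 1 w.p) :=
    Wr.ext (funext fun i => by simp) (by simp)
  exact ⟨w.l, Wr.mk 1 w.p • y, by rw [← mk_mul_map, ← hw]⟩

lemma powToPi_mk_one (a : ι → H) (y : ι → X) :
    powToPi f ι (mk (wrMapHom f ι) (Wr.mk a 1) y) = fun i => mk f (a i) (y i) := rfl

lemma powToPi_injective : Function.Injective (powToPi f ι (X := X)) := by
  intro q q' hqq'
  obtain ⟨a, y, rfl⟩ := exists_mk_one_eq q
  obtain ⟨b, z, rfl⟩ := exists_mk_one_eq q'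
  rw [powToPi_mk_one, powToPi_mk_one, funext_iff] at hqq'
  choose k hb hz using fun i => mk_eq_mk_iff.1 (hqq' i)
  have hab : Wr.mk a 1 = Wr.mk b 1 * wrMapHom f ι (Wr.mk k 1) :=
    Wr.ext (funext fun i => by simp [hb, pull_end]) (by simp)
  have hkz : Wr.mk k 1 • y = z := funext fun i => (hz i).symm
  rw [hab, mk_mul_map, hkz]

lemma powToPi_surjective : Function.Surjective (powToPi f ι (X := X)) := by
  intro q
  choose a y hq using fun i => exists_mk_eq (q i)
  exact ⟨mk (wrMapHom f ι) (Wr.mk a 1) y, funext hq⟩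

variable (f X ι)

noncomputable def powEquivPi : Ind (wrMapHom f ι) (ι → X) ≃ (ι → Ind f X) :=
  Equiv.ofBijective (powToPi f ι) ⟨powToPi_injective, powToPi_surjective⟩

lemma powEquivPi_smul (w : Wr H ι) (q : Ind (wrMapHom f ι) (ι → X)) :
    powEquivPi f X ι (w • q) = w • powEquivPi f X ι q :=
  powToPi_smul w q

end Ind

theorem power_of_induced_is_induced_of_power_general
    (H : Type) [Group H] (G : Subgroup H) (X : Type) [MulAction G X]
    (n : ℕ) :
    ∃ e : (Fin n → Ind G.subtype X) ≃ Ind (wrMapHom G.subtype (Fin n)) (Fin n → X),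
      ∀ (w : Wr H (Fin n)) (y : Fin n → Ind G.subtype X), e (w • y) = w • e y := by
  refine ⟨(Ind.powEquivPi G.subtype X (Fin n)).symm, fun w y => ?_⟩
  rw [Equiv.symm_apply_eq, Ind.powEquivPi_smul, Equiv.apply_symm_apply]

theorem power_of_induced_is_induced_of_power
    (H : Type) [Group H] [Finite H] (G : Subgroup H) (X : Type) [MulAction G X] [Finite X]
    (n : ℕ) :
    ∃ e : (Fin n → Ind G.subtype X) ≃ Ind (wrMapHom G.subtype (Fin n)) (Fin n → X),
      ∀ (w : Wr H (Fin n)) (y : Fin n → Ind G.subtype X), e (w • y) = w • e y :=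
  power_of_induced_is_induced_of_power_general H G X n
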